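/- arXiv:2208.03246 — 6 statements merged into one kernel-verified Lean document; each statement's English description precedes it below -/
import Mathlib

section
/- Let P, Q be d×d symmetric positive-semidefinite matrices, Γ a k×k symmetric positive-definite matrix, and A a k×d matrix. With K(Q) = Q Aᵀ (A Q Aᵀ + Γ)⁻¹, one has ‖K(Q) − K(P)‖ ≤ ‖Q − P‖ ‖A‖ ‖Γ⁻¹‖ (1 + min(‖P‖, ‖Q‖) ‖A‖² ‖Γ⁻¹‖). -/
open Matrix

/-- Operator (spectral) norm of a real matrix, via its action on Euclidean space. -/
noncomputable def opNorm {m n : Type*} [Fintype m] [Fintype n] [DecidableEq n]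
    (A : Matrix m n ℝ) : ℝ :=
  ‖LinearMap.toContinuousLinearMap (Matrix.toEuclideanLin A)‖

/-- Maximum absolute entry of a matrix. -/
noncomputable def maxNorm {m n : Type*} [Fintype m] [Fintype n] (A : Matrix m n ℝ) : ℝ :=
  ⨆ ij : m × n, |A ij.1 ij.2|

/-!
The gain difference splits, by the resolvent identity `S⁻¹ - T⁻¹ = S⁻¹ (T - S) T⁻¹` for the
innovation covariances `S = A P Aᴴ + Γ` and `T = A Q Aᴴ + Γ`, as
`K(Q) - K(P) = (Q - P) Aᴴ T⁻¹ - P Aᴴ S⁻¹ A (Q - P) Aᴴ T⁻¹`, so everything reduces to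
`‖S⁻¹‖, ‖T⁻¹‖ ≤ ‖Γ⁻¹‖`. That holds because `Γ ≤ S` in the Loewner order: writing `R = √Γ`,
`‖x‖² ≤ ‖R⁻¹‖² ‖R x‖² = ‖Γ⁻¹‖ ⟪x, Γ x⟫ ≤ ‖Γ⁻¹‖ ⟪x, S x⟫ ≤ ‖Γ⁻¹‖ ‖x‖ ‖S x‖`.
Exchanging `P` and `Q` gives the `min`.
-/

open scoped Matrix.Norms.L2Operator MatrixOrder ComplexOrder InnerProductSpace

namespace Matrix

section Positive

variable {𝕜 n : Type*} [RCLike 𝕜] [Fintype n] [DecidableEq n]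

theorem PosSemidef.re_inner_toEuclideanCLM_nonneg {M : Matrix n n 𝕜} (hM : M.PosSemidef)
    (x : EuclideanSpace 𝕜 n) : 0 ≤ RCLike.re ⟪x, toEuclideanCLM (𝕜 := 𝕜) M x⟫_𝕜 :=
  (isPositive_toEuclideanLin_iff.2 hM).re_inner_nonneg_right x

theorem PosDef.norm_sq_le_norm_inv_mul_re_inner {Γ : Matrix n n 𝕜} (hΓ : Γ.PosDef)
    (x : EuclideanSpace 𝕜 n) :
    ‖x‖ ^ 2 ≤ ‖Γ⁻¹‖ * RCLike.re ⟪x, toEuclideanCLM (𝕜 := 𝕜) Γ x⟫_𝕜 := by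
  set R := CFC.sqrt Γ
  have hR : IsSelfAdjoint R := (CFC.sqrt_nonneg Γ).isSelfAdjoint
  have hRR : R * R = Γ := CFC.sqrt_mul_sqrt_self Γ hΓ.posSemidef.nonneg
  have hRunit : IsUnit R.det := (isUnit_iff_isUnit_det R).1 <|
    isUnit_of_mul_isUnit_left (hRR ▸ hΓ.isUnit)
  have hRinv : star R⁻¹ = R⁻¹ := by
    rw [star_eq_conjTranspose, conjTranspose_nonsing_inv, ← star_eq_conjTranspose, hR.star_eq]
  have hnorm_inv : ‖R⁻¹‖ ^ 2 = ‖Γ⁻¹‖ := by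
    rw [← hRR, mul_inv_rev, sq, ← CStarRing.norm_star_mul_self, hRinv]
  have hinner : RCLike.re ⟪x, toEuclideanCLM (𝕜 := 𝕜) Γ x⟫_𝕜
      = ‖toEuclideanCLM (𝕜 := 𝕜) R x‖ ^ 2 := by
    rw [← hRR, map_mul, ContinuousLinearMap.mul_def, ContinuousLinearMap.comp_apply,
      ← ContinuousLinearMap.adjoint_inner_left, ← ContinuousLinearMap.star_eq_adjoint, ← map_star,
      hR.star_eq, inner_self_eq_norm_sq]
  have hx : ‖x‖ ≤ ‖R⁻¹‖ * ‖toEuclideanCLM (𝕜 := 𝕜) R x‖ := calc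
    ‖x‖ = ‖toEuclideanCLM (𝕜 := 𝕜) R⁻¹ (toEuclideanCLM (𝕜 := 𝕜) R x)‖ := by
        rw [← ContinuousLinearMap.comp_apply, ← ContinuousLinearMap.mul_def, ← map_mul,
          nonsing_inv_mul _ hRunit, map_one]
        rfl
    _ ≤ ‖R⁻¹‖ * ‖toEuclideanCLM (𝕜 := 𝕜) R x‖ := ContinuousLinearMap.le_opNorm _ _
  calc ‖x‖ ^ 2 ≤ (‖R⁻¹‖ * ‖toEuclideanCLM (𝕜 := 𝕜) R x‖) ^ 2 := by gcongr
    _ = ‖Γ⁻¹‖ * RCLike.re ⟪x, toEuclideanCLM (𝕜 := 𝕜) Γ x⟫_𝕜 := by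
        rw [mul_pow, hnorm_inv, hinner]

theorem PosDef.norm_inv_le_norm_inv_of_le {Γ S : Matrix n n 𝕜} (hΓ : Γ.PosDef) (hΓS : Γ ≤ S) :
    ‖S⁻¹‖ ≤ ‖Γ⁻¹‖ := by
  have hS : S.PosDef := by simpa using hΓ.add_posSemidef hΓS
  refine ContinuousLinearMap.opNorm_le_bound _ (norm_nonneg _) fun y => ?_
  set x := toEuclideanCLM (𝕜 := 𝕜) S⁻¹ y
  have hSx : toEuclideanCLM (𝕜 := 𝕜) S x = y := by
    rw [← ContinuousLinearMap.comp_apply, ← ContinuousLinearMap.mul_def, ← map_mul,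
      mul_nonsing_inv _ hS.det_pos.ne'.isUnit, map_one]
    rfl
  have key : ‖x‖ ^ 2 ≤ ‖Γ⁻¹‖ * (‖x‖ * ‖y‖) := calc
    ‖x‖ ^ 2 ≤ ‖Γ⁻¹‖ * RCLike.re ⟪x, toEuclideanCLM (𝕜 := 𝕜) Γ x⟫_𝕜 :=
        hΓ.norm_sq_le_norm_inv_mul_re_inner x
    _ ≤ ‖Γ⁻¹‖ * RCLike.re ⟪x, toEuclideanCLM (𝕜 := 𝕜) S x⟫_𝕜 := by
        have := (le_iff.1 hΓS).re_inner_toEuclideanCLM_nonneg x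
        rw [map_sub, _root_.sub_apply, inner_sub_right, map_sub, sub_nonneg] at this
        gcongr
    _ ≤ ‖Γ⁻¹‖ * (‖x‖ * ‖y‖) := by
        rw [hSx]
        gcongr
        exact re_inner_le_norm x y
  show ‖x‖ ≤ ‖Γ⁻¹‖ * ‖y‖
  nlinarith [mul_nonneg (norm_nonneg Γ⁻¹) (norm_nonneg y), norm_nonneg x]

theorem PosDef.norm_inv_add_le {Γ M : Matrix n n 𝕜} (hΓ : Γ.PosDef) (hM : M.PosSemidef) :
    ‖(M + Γ)⁻¹‖ ≤ ‖Γ⁻¹‖ :=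
  hΓ.norm_inv_le_norm_inv_of_le (le_add_of_nonneg_left hM.nonneg)

end Positive

theorem l2_opNorm_mul_mul_le {𝕜 l m n p : Type*} [RCLike 𝕜] [Fintype l] [Fintype m] [Fintype n]
    [Fintype p] [DecidableEq m] [DecidableEq n] [DecidableEq p] (X : Matrix l m 𝕜)
    (Y : Matrix m n 𝕜) (Z : Matrix n p 𝕜) : ‖X * Y * Z‖ ≤ ‖X‖ * ‖Y‖ * ‖Z‖ :=
  (l2_opNorm_mul _ _).trans <| by gcongr; exact l2_opNorm_mul _ _

section KalmanGain

variable {𝕜 m n : Type*} [RCLike 𝕜] [Fintype m] [Fintype n] [DecidableEq m]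

noncomputable def kalmanGain (A : Matrix m n 𝕜) (Γ : Matrix m m 𝕜) (Q : Matrix n n 𝕜) :
    Matrix n m 𝕜 :=
  Q * Aᴴ * (A * Q * Aᴴ + Γ)⁻¹

theorem kalmanGain_sub_kalmanGain {A : Matrix m n 𝕜} {Γ : Matrix m m 𝕜} {P Q : Matrix n n 𝕜}
    (hP : IsUnit (A * P * Aᴴ + Γ)) (hQ : IsUnit (A * Q * Aᴴ + Γ)) :
    kalmanGain A Γ Q - kalmanGain A Γ P = (Q - P) * Aᴴ * (A * Q * Aᴴ + Γ)⁻¹ -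
      P * Aᴴ * ((A * P * Aᴴ + Γ)⁻¹ * (A * (Q - P) * Aᴴ) * (A * Q * Aᴴ + Γ)⁻¹) := by
  have hdiff : A * (Q - P) * Aᴴ = (A * Q * Aᴴ + Γ) - (A * P * Aᴴ + Γ) := by
    rw [Matrix.mul_sub, Matrix.sub_mul]
    abel
  rw [hdiff, ← inv_sub_inv ⟨fun _ => hQ, fun _ => hP⟩, kalmanGain, kalmanGain, Matrix.mul_sub,
    Matrix.sub_mul, Matrix.sub_mul]
  abel

theorem norm_kalmanGain_sub_kalmanGain_le [DecidableEq n] {A : Matrix m n 𝕜} {Γ : Matrix m m 𝕜}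
    {P Q : Matrix n n 𝕜} (hP : P.PosSemidef) (hQ : Q.PosSemidef) (hΓ : Γ.PosDef) :
    ‖kalmanGain A Γ Q - kalmanGain A Γ P‖
      ≤ ‖Q - P‖ * ‖A‖ * ‖Γ⁻¹‖ * (1 + ‖P‖ * ‖A‖ ^ 2 * ‖Γ⁻¹‖) := by
  have hAP := hP.mul_mul_conjTranspose_same A
  have hAQ := hQ.mul_mul_conjTranspose_same A
  have hSP := hΓ.norm_inv_add_le hAP
  have hSQ := hΓ.norm_inv_add_le hAQ
  have hAH : ‖Aᴴ‖ ≤ ‖A‖ := (l2_opNorm_conjTranspose A).le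
  have hcorrection : ‖(A * P * Aᴴ + Γ)⁻¹ * (A * (Q - P) * Aᴴ) * (A * Q * Aᴴ + Γ)⁻¹‖
      ≤ ‖Γ⁻¹‖ * (‖A‖ * ‖Q - P‖ * ‖A‖) * ‖Γ⁻¹‖ :=
    (l2_opNorm_mul_mul_le _ _ _).trans <| by
      gcongr
      exact (l2_opNorm_mul_mul_le _ _ _).trans (by gcongr)
  calc ‖kalmanGain A Γ Q - kalmanGain A Γ P‖
      = ‖(Q - P) * Aᴴ * (A * Q * Aᴴ + Γ)⁻¹ -
          P * Aᴴ * ((A * P * Aᴴ + Γ)⁻¹ * (A * (Q - P) * Aᴴ) * (A * Q * Aᴴ + Γ)⁻¹)‖ := by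
        rw [kalmanGain_sub_kalmanGain (hΓ.posSemidef_add hAP).isUnit
          (hΓ.posSemidef_add hAQ).isUnit]
    _ ≤ ‖(Q - P) * Aᴴ * (A * Q * Aᴴ + Γ)⁻¹‖ +
          ‖P * Aᴴ * ((A * P * Aᴴ + Γ)⁻¹ * (A * (Q - P) * Aᴴ) * (A * Q * Aᴴ + Γ)⁻¹)‖ :=
        norm_sub_le _ _
    _ ≤ ‖Q - P‖ * ‖A‖ * ‖Γ⁻¹‖ + ‖P‖ * ‖A‖ * (‖Γ⁻¹‖ * (‖A‖ * ‖Q - P‖ * ‖A‖) * ‖Γ⁻¹‖) := by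
        gcongr
        · exact (l2_opNorm_mul_mul_le _ _ _).trans (by gcongr)
        · exact (l2_opNorm_mul_mul_le _ _ _).trans (by gcongr)
    _ = ‖Q - P‖ * ‖A‖ * ‖Γ⁻¹‖ * (1 + ‖P‖ * ‖A‖ ^ 2 * ‖Γ⁻¹‖) := by ring

end KalmanGain

end Matrix

/-- Continuity of the Kalman gain operator. -/
theorem kalman_gain_continuity {d k : ℕ}
    (P Q : Matrix (Fin d) (Fin d) ℝ)
    (Γ : Matrix (Fin k) (Fin k) ℝ) (A : Matrix (Fin k) (Fin d) ℝ)
    (hP : P.PosSemidef) (hQ : Q.PosSemidef) (hΓ : Γ.PosDef) :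
    opNorm (Q * Aᵀ * (A * Q * Aᵀ + Γ)⁻¹ - P * Aᵀ * (A * P * Aᵀ + Γ)⁻¹)
      ≤ opNorm (Q - P) * opNorm A * opNorm Γ⁻¹ *
        (1 + min (opNorm P) (opNorm Q) * opNorm A ^ 2 * opNorm Γ⁻¹) := by
  have hQP := norm_kalmanGain_sub_kalmanGain_le (A := A) hP hQ hΓ
  have hPQ := norm_kalmanGain_sub_kalmanGain_le (A := A) hQ hP hΓ
  rw [norm_sub_rev, norm_sub_rev P] at hPQ
  simp only [kalmanGain, conjTranspose_eq_transpose_of_trivial] at hQP hPQ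
  rcases min_choice (opNorm P) (opNorm Q) with h | h <;> rw [h]
  · exact hQP
  · exact hPQ
end

section
/- Let P, Q be d×k real matrices, Q' a k×k symmetric positive-semidefinite matrix, and Γ a k×k symmetric positive-definite matrix. Then the gain operator 𝒫(P, Q') = P (Q' + Γ)⁻¹ satisfies ‖𝒫(P, Q')‖ ≤ ‖Γ⁻¹‖ ‖P‖ + ‖Γ⁻¹‖² ‖Q'‖. -/
/-!
The bound holds even without the term `‖Γ⁻¹‖² ‖Q'‖`. Submultiplicativity gives
`‖P (Q' + Γ)⁻¹‖ ≤ ‖P‖ ‖(Q' + Γ)⁻¹‖`, and the norm of the inverse is antitone for the Loewner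
order: if `T` is positive, `T ≤ S`, `T G = 1` and `S H = 1`, then `‖H‖ ≤ ‖G‖`. Indeed, for
`y = H x`, Cauchy–Schwarz for the semi-inner product `⟪T ·, ·⟫` applied to `y` and `G y` gives
`‖y‖² ≤ ‖G‖ ⟪T y, y⟫ ≤ ‖G‖ ⟪S y, y⟫ = ‖G‖ ⟪x, y⟫ ≤ ‖G‖ ‖x‖ ‖y‖`.
-/

open Matrix

open scoped RealInnerProductSpace

namespace ContinuousLinearMap

variable {E : Type*} [NormedAddCommGroup E] [InnerProductSpace ℝ E]

theorem IsPositive.inner_mul_inner_self_le {T : E →L[ℝ] E} (hT : T.IsPositive) (x y : E) :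
    ⟪T x, y⟫ * ⟪T x, y⟫ ≤ ⟪T x, x⟫ * ⟪T y, y⟫ := by
  have hsymm : ⟪T y, x⟫ = ⟪T x, y⟫ := by
    rw [hT.inner_left_eq_inner_right, real_inner_comm]
  have hquad := discrim_le_zero (a := ⟪T y, y⟫) (b := 2 * ⟪T x, y⟫) (c := ⟪T x, x⟫) fun t => by
    have := hT.inner_nonneg_left (t • y + x)
    simp only [map_add, map_smul, inner_add_left, inner_add_right, inner_smul_left,
      inner_smul_right, hsymm, RCLike.conj_to_real] at this
    linarith
  rw [discrim] at hquad
  linarith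

theorem IsPositive.norm_sq_le_of_mul_eq_one {T G : E →L[ℝ] E} (hT : T.IsPositive)
    (hTG : T * G = 1) (y : E) : ‖y‖ ^ 2 ≤ ‖G‖ * ⟪T y, y⟫ := by
  have hy : ⟪T y, G y⟫ = ‖y‖ ^ 2 := by
    rw [hT.inner_left_eq_inner_right, ← mul_apply_eq_comp, hTG, one_apply_eq_self,
      real_inner_self_eq_norm_sq]
  have hGy : ⟪T (G y), G y⟫ ≤ ‖G‖ * ‖y‖ ^ 2 := by
    rw [← mul_apply_eq_comp, hTG, one_apply_eq_self]
    calc ⟪y, G y⟫ ≤ ‖y‖ * ‖G y‖ := real_inner_le_norm _ _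
      _ ≤ ‖y‖ * (‖G‖ * ‖y‖) := by gcongr; exact G.le_opNorm y
      _ = ‖G‖ * ‖y‖ ^ 2 := by ring
  have hcs := hT.inner_mul_inner_self_le y (G y)
  rw [hy] at hcs
  have hTy := hT.inner_nonneg_left y
  rcases (sq_nonneg ‖y‖).eq_or_lt with h0 | hpos
  · rw [← h0]; positivity
  · nlinarith [mul_le_mul_of_nonneg_left hGy hTy]

theorem IsPositive.norm_le_norm_of_le_of_mul_eq_one {T S G H : E →L[ℝ] E} (hT : T.IsPositive)
    (hTS : T ≤ S) (hTG : T * G = 1) (hSH : S * H = 1) : ‖H‖ ≤ ‖G‖ := by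
  refine opNorm_le_bound _ (norm_nonneg G) fun x => ?_
  have hSy : ⟪T (H x), H x⟫ ≤ ⟪x, H x⟫ := by
    have := hTS.inner_nonneg_left (H x)
    rw [_root_.sub_apply, inner_sub_left, ← mul_apply_eq_comp, hSH, one_apply_eq_self] at this
    linarith
  have := calc ‖H x‖ ^ 2 ≤ ‖G‖ * ⟪T (H x), H x⟫ := hT.norm_sq_le_of_mul_eq_one hTG (H x)
    _ ≤ ‖G‖ * ⟪x, H x⟫ := by gcongr
    _ ≤ ‖G‖ * (‖x‖ * ‖H x‖) := by gcongr; exact real_inner_le_norm _ _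
  rcases (norm_nonneg (H x)).eq_or_lt with h0 | hpos
  · rw [← h0]; positivity
  · nlinarith

end ContinuousLinearMap

open scoped Matrix.Norms.L2Operator in
theorem opNorm_mul_le {l m n : Type*} [Fintype l] [Fintype m] [Fintype n] [DecidableEq m]
    [DecidableEq n] (A : Matrix l m ℝ) (B : Matrix m n ℝ) :
    opNorm (A * B) ≤ opNorm A * opNorm B :=
  l2_opNorm_mul A B

section Square

variable {n : Type*} [Fintype n] [DecidableEq n]

theorem isPositive_toEuclideanCLM_iff {A : Matrix n n ℝ} :
    (toEuclideanCLM (𝕜 := ℝ) A).IsPositive ↔ A.PosSemidef :=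
  isPositive_toEuclideanLin_iff

theorem toEuclideanCLM_mul_inv {A : Matrix n n ℝ} (hA : A.PosDef) :
    toEuclideanCLM (𝕜 := ℝ) A * toEuclideanCLM (𝕜 := ℝ) A⁻¹ = 1 := by
  rw [← map_mul, mul_nonsing_inv _ ((isUnit_iff_isUnit_det A).1 hA.isUnit), map_one]

theorem opNorm_inv_add_le {Q Γ : Matrix n n ℝ} (hQ : Q.PosSemidef) (hΓ : Γ.PosDef) :
    opNorm (Q + Γ)⁻¹ ≤ opNorm Γ⁻¹ := by
  refine (isPositive_toEuclideanCLM_iff.2 hΓ.posSemidef).norm_le_norm_of_le_of_mul_eq_one ?_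
    (toEuclideanCLM_mul_inv hΓ) (toEuclideanCLM_mul_inv (PosDef.posSemidef_add hQ hΓ))
  rw [ContinuousLinearMap.le_def, ← map_sub, add_sub_cancel_right]
  exact isPositive_toEuclideanCLM_iff.2 hQ

end Square

/-- Boundedness of the nonlinear gain-update operator `𝒫(P, Q') = P (Q' + Γ)⁻¹`. -/
theorem gain_update_bounded {d k : ℕ}
    (P : Matrix (Fin d) (Fin k) ℝ)
    (Q' : Matrix (Fin k) (Fin k) ℝ)
    (Γ : Matrix (Fin k) (Fin k) ℝ)
    (hQ' : Q'.PosSemidef) (hΓ : Γ.PosDef) :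
    opNorm (P * (Q' + Γ)⁻¹) ≤ opNorm Γ⁻¹ * opNorm P + opNorm Γ⁻¹ ^ 2 * opNorm Q' := by
  have hP : 0 ≤ opNorm P := norm_nonneg _
  have hQ'_norm : 0 ≤ opNorm Q' := norm_nonneg _
  calc opNorm (P * (Q' + Γ)⁻¹) ≤ opNorm P * opNorm (Q' + Γ)⁻¹ := opNorm_mul_le _ _
    _ ≤ opNorm P * opNorm Γ⁻¹ := by gcongr; exact opNorm_inv_add_le hQ' hΓ
    _ = opNorm Γ⁻¹ * opNorm P := mul_comm _ _
    _ ≤ opNorm Γ⁻¹ * opNorm P + opNorm Γ⁻¹ ^ 2 * opNorm Q' := le_add_of_nonneg_right (by positivity)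
end

section
/- Let P, Q be d×d symmetric positive-semidefinite matrices, Γ a k×k symmetric positive-definite matrix, and A a k×d matrix. With C(Q) = Q − Q Aᵀ (A Q Aᵀ + Γ)⁻¹ A Q, one has ‖C(Q) − C(P)‖ ≤ ‖Q − P‖ (1 + ‖A‖² ‖Γ⁻¹‖ (‖Q‖ + ‖P‖) + ‖A‖⁴ ‖Γ⁻¹‖² ‖Q‖ ‖P‖). -/
/-!
Writing `X = (A Q Aᵀ + Γ)⁻¹` and `Y = (A P Aᵀ + Γ)⁻¹`, the identity
`X (A Q Aᵀ - A P Aᵀ) Y = Y - X` gives the factorisation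
`C(Q) - C(P) = (1 - Q Aᵀ X A) (Q - P) (1 - Aᵀ Y A P)`.
Since `A Q Aᵀ ⪰ 0`, the quadratic form of `A Q Aᵀ + Γ` dominates that of `Γ`, which is coercive
with constant `‖Γ⁻¹‖⁻¹`; hence `‖X‖, ‖Y‖ ≤ ‖Γ⁻¹‖`. The two outer factors therefore have norm at
most `1 + ‖A‖² ‖Γ⁻¹‖ ‖Q‖` and `1 + ‖A‖² ‖Γ⁻¹‖ ‖P‖`, and the product of these is the stated bound.
-/

open Matrix

open scoped Matrix.Norms.L2Operator MatrixOrder RealInnerProductSpace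

theorem ContinuousLinearMap.opNorm_le_of_norm_sq_le_inner {E : Type*} [NormedAddCommGroup E]
    [InnerProductSpace ℝ E] {T S : E →L[ℝ] E} (hTS : ∀ y, T (S y) = y) {c : ℝ} (hc : 0 ≤ c)
    (h : ∀ x, ‖x‖ ^ 2 ≤ c * ⟪x, T x⟫) : ‖S‖ ≤ c := by
  refine S.opNorm_le_bound hc fun y => ?_
  have hSy : ‖S y‖ ^ 2 ≤ c * (‖S y‖ * ‖y‖) :=
    (hTS y ▸ h (S y)).trans (by gcongr; exact real_inner_le_norm _ _)
  rcases (norm_nonneg (S y)).eq_or_lt with h0 | hpos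
  · rw [← h0]; positivity
  · nlinarith

namespace Matrix

theorem sub_sub_sub_eq_mul_sub_mul {R : Type*} [Ring R] {m n : Type*} [Fintype m] [Fintype n]
    [DecidableEq m] [DecidableEq n] (P Q : Matrix n n R) (A : Matrix m n R) (B : Matrix n m R)
    (G X Y : Matrix m m R) (hX : X * (A * Q * B + G) = 1) (hY : (A * P * B + G) * Y = 1) :
    (Q - Q * B * X * A * Q) - (P - P * B * Y * A * P)
      = (1 - Q * B * X * A) * (Q - P) * (1 - B * Y * A * P) := by
  have hXY : X * (A * Q * B - A * P * B) * Y = Y - X := by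
    calc X * (A * Q * B - A * P * B) * Y
        = X * (A * Q * B + G) * Y - X * ((A * P * B + G) * Y) := by noncomm_ring
      _ = Y - X := by rw [hX, hY, Matrix.one_mul, Matrix.mul_one]
  calc (Q - Q * B * X * A * Q) - (P - P * B * Y * A * P)
      = (Q - Q * B * X * A * Q) - (P - P * B * Y * A * P)
        + Q * B * (X * (A * Q * B - A * P * B) * Y - (Y - X)) * A * P := by
        rw [hXY, sub_self, Matrix.mul_zero, Matrix.zero_mul, Matrix.zero_mul, add_zero]
    _ = (1 - Q * B * X * A) * (Q - P) * (1 - B * Y * A * P) := by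
        simp only [Matrix.mul_sub, Matrix.sub_mul, Matrix.mul_one, Matrix.one_mul, Matrix.mul_assoc]
        abel

theorem isUnit_det_mul_mul_conjTranspose_add {m n : Type*} [Fintype m] [Fintype n]
    [DecidableEq m] {S : Matrix n n ℝ} {Γ : Matrix m m ℝ}
    (hS : S.PosSemidef) (hΓ : Γ.PosDef) (A : Matrix m n ℝ) : IsUnit (A * S * Aᴴ + Γ).det :=
  (isUnit_iff_isUnit_det _).mp
    (PosDef.posSemidef_add (hS.mul_mul_conjTranspose_same A) hΓ).isUnit

variable {𝕜 : Type*} [RCLike 𝕜] {m n : Type*} [Fintype m] [Fintype n] [DecidableEq n]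

theorem l2_opNorm_one_sub_mul_le (M N : Matrix n n 𝕜) : ‖1 - M * N‖ ≤ 1 + ‖M‖ * ‖N‖ := by
  have hone : ‖(1 : Matrix n n 𝕜)‖ ≤ 1 := by
    rw [cstar_norm_def, map_one]
    exact ContinuousLinearMap.norm_id_le
  exact (norm_sub_le _ _).trans (add_le_add hone (norm_mul_le _ _))

theorem l2_opNorm_conjTranspose_mul_mul_le [DecidableEq m] (A : Matrix m n 𝕜)
    (X : Matrix m m 𝕜) : ‖Aᴴ * X * A‖ ≤ ‖A‖ ^ 2 * ‖X‖ :=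
  calc ‖Aᴴ * X * A‖ ≤ ‖Aᴴ‖ * ‖X‖ * ‖A‖ :=
        (l2_opNorm_mul _ _).trans (by gcongr; exact l2_opNorm_mul _ _)
    _ = ‖A‖ ^ 2 * ‖X‖ := by rw [l2_opNorm_conjTranspose]; ring

theorem toEuclideanCLM_apply_apply_of_mul_eq_one {A B : Matrix n n ℝ} (h : A * B = 1)
    (x : EuclideanSpace ℝ n) : toEuclideanCLM (𝕜 := ℝ) A (toEuclideanCLM (𝕜 := ℝ) B x) = x := by
  rw [← mul_apply_eq_comp, ← map_mul, h, map_one, one_apply_eq_self]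

theorem PosSemidef.inner_toEuclideanCLM_nonneg {S : Matrix n n ℝ} (hS : S.PosSemidef)
    (x : EuclideanSpace ℝ n) : 0 ≤ ⟪x, toEuclideanCLM (𝕜 := ℝ) S x⟫ :=
  (isPositive_toEuclideanLin_iff.mpr hS).inner_nonneg_right x

theorem PosDef.norm_sq_le_l2_opNorm_inv_mul_inner {Γ : Matrix n n ℝ} (hΓ : Γ.PosDef)
    (x : EuclideanSpace ℝ n) : ‖x‖ ^ 2 ≤ ‖Γ⁻¹‖ * ⟪x, toEuclideanCLM (𝕜 := ℝ) Γ x⟫ := by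
  obtain ⟨B, rfl⟩ := CStarAlgebra.nonneg_iff_eq_star_mul_self.mp hΓ.posSemidef.nonneg
  have hB : IsUnit B.det := (isUnit_iff_isUnit_det B).mp (isUnit_of_mul_isUnit_right hΓ.isUnit)
  have hinv : ‖(star B * B)⁻¹‖ = ‖B⁻¹‖ ^ 2 := by
    rw [mul_inv_rev, star_eq_conjTranspose, ← conjTranspose_nonsing_inv, ← star_eq_conjTranspose,
      CStarRing.norm_self_mul_star, sq]
  have hquad : ⟪x, toEuclideanCLM (𝕜 := ℝ) (star B * B) x⟫
      = ‖toEuclideanCLM (𝕜 := ℝ) B x‖ ^ 2 := by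
    rw [map_mul, map_star, mul_apply_eq_comp, ContinuousLinearMap.star_eq_adjoint,
      ContinuousLinearMap.adjoint_inner_right, real_inner_self_eq_norm_sq]
  have hx : ‖x‖ ≤ ‖B⁻¹‖ * ‖toEuclideanCLM (𝕜 := ℝ) B x‖ := by
    conv_lhs => rw [← toEuclideanCLM_apply_apply_of_mul_eq_one (nonsing_inv_mul B hB) x]
    exact ContinuousLinearMap.le_opNorm _ _
  rw [hinv, hquad, ← mul_pow]
  gcongr

theorem l2_opNorm_inv_add_le {S Γ : Matrix n n ℝ} (hS : S.PosSemidef) (hΓ : Γ.PosDef) :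
    ‖(S + Γ)⁻¹‖ ≤ ‖Γ⁻¹‖ := by
  have hdet : IsUnit (S + Γ).det :=
    (isUnit_iff_isUnit_det _).mp (PosDef.posSemidef_add hS hΓ).isUnit
  refine ContinuousLinearMap.opNorm_le_of_norm_sq_le_inner
    (toEuclideanCLM_apply_apply_of_mul_eq_one (mul_nonsing_inv _ hdet)) (norm_nonneg _)
    fun x => ?_
  calc ‖x‖ ^ 2 ≤ ‖Γ⁻¹‖ * ⟪x, toEuclideanCLM (𝕜 := ℝ) Γ x⟫ :=
        hΓ.norm_sq_le_l2_opNorm_inv_mul_inner x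
    _ ≤ ‖Γ⁻¹‖ * ⟪x, toEuclideanCLM (𝕜 := ℝ) (S + Γ) x⟫ := by
        rw [map_add, _root_.add_apply, inner_add_right]
        gcongr
        exact le_add_of_nonneg_left (hS.inner_toEuclideanCLM_nonneg x)

variable [DecidableEq m]

theorem l2_opNorm_conjTranspose_mul_inv_mul_le {S : Matrix n n ℝ} {Γ : Matrix m m ℝ}
    (hS : S.PosSemidef) (hΓ : Γ.PosDef) (A : Matrix m n ℝ) :
    ‖Aᴴ * (A * S * Aᴴ + Γ)⁻¹ * A‖ ≤ ‖A‖ ^ 2 * ‖Γ⁻¹‖ :=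
  (l2_opNorm_conjTranspose_mul_mul_le _ _).trans
    (by gcongr; exact l2_opNorm_inv_add_le (hS.mul_mul_conjTranspose_same A) hΓ)

end Matrix

/-- Continuity of the covariance-update operator
`C(Q) = Q − Q Aᵀ (A Q Aᵀ + Γ)⁻¹ A Q`. -/
theorem covariance_update_continuity {d k : ℕ}
    (P Q : Matrix (Fin d) (Fin d) ℝ)
    (Γ : Matrix (Fin k) (Fin k) ℝ) (A : Matrix (Fin k) (Fin d) ℝ)
    (hP : P.PosSemidef) (hQ : Q.PosSemidef) (hΓ : Γ.PosDef) :
    opNorm ((Q - Q * Aᵀ * (A * Q * Aᵀ + Γ)⁻¹ * A * Q)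
        - (P - P * Aᵀ * (A * P * Aᵀ + Γ)⁻¹ * A * P))
      ≤ opNorm (Q - P) * (1 + opNorm A ^ 2 * opNorm Γ⁻¹ * (opNorm Q + opNorm P)
          + opNorm A ^ 4 * opNorm Γ⁻¹ ^ 2 * opNorm Q * opNorm P) := by
  change ‖_‖ ≤ ‖Q - P‖ * (1 + ‖A‖ ^ 2 * ‖Γ⁻¹‖ * (‖Q‖ + ‖P‖) + ‖A‖ ^ 4 * ‖Γ⁻¹‖ ^ 2 * ‖Q‖ * ‖P‖)
  rw [← conjTranspose_eq_transpose_of_trivial A, sub_sub_sub_eq_mul_sub_mul P Q A Aᴴ Γ _ _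
    (nonsing_inv_mul _ (isUnit_det_mul_mul_conjTranspose_add hQ hΓ A))
    (mul_nonsing_inv _ (isUnit_det_mul_mul_conjTranspose_add hP hΓ A))]
  set X := (A * Q * Aᴴ + Γ)⁻¹
  set Y := (A * P * Aᴴ + Γ)⁻¹
  have hL : ‖1 - Q * Aᴴ * X * A‖ ≤ 1 + ‖Q‖ * (‖A‖ ^ 2 * ‖Γ⁻¹‖) := by
    rw [show Q * Aᴴ * X * A = Q * (Aᴴ * X * A) by simp only [Matrix.mul_assoc]]
    exact (l2_opNorm_one_sub_mul_le _ _).trans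
      (by gcongr; exact l2_opNorm_conjTranspose_mul_inv_mul_le hQ hΓ A)
  have hR : ‖1 - Aᴴ * Y * A * P‖ ≤ 1 + ‖A‖ ^ 2 * ‖Γ⁻¹‖ * ‖P‖ :=
    (l2_opNorm_one_sub_mul_le _ _).trans
      (by gcongr; exact l2_opNorm_conjTranspose_mul_inv_mul_le hP hΓ A)
  calc _ ≤ ‖1 - Q * Aᴴ * X * A‖ * ‖Q - P‖ * ‖1 - Aᴴ * Y * A * P‖ :=
        (norm_mul_le _ _).trans (by gcongr; exact norm_mul_le _ _)
    _ ≤ (1 + ‖Q‖ * (‖A‖ ^ 2 * ‖Γ⁻¹‖)) * ‖Q - P‖ * (1 + ‖A‖ ^ 2 * ‖Γ⁻¹‖ * ‖P‖) := by gcongr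
    _ = ‖Q - P‖ * (1 + ‖A‖ ^ 2 * ‖Γ⁻¹‖ * (‖Q‖ + ‖P‖) + ‖A‖ ^ 4 * ‖Γ⁻¹‖ ^ 2 * ‖Q‖ * ‖P‖) := by
        ring
end

section
/- Fix q ∈ [0,1) and positive reals s, b. Let S be a d×d real symmetric matrix with max over i of Σⱼ |S_{ij}|^q ≤ s, and let B be a k×d real matrix with max over i of Σⱼ |B_{ij}|^q ≤ b. Assume all entries of S and B are nonnegative. Then every row sum of the product BS satisfies Σⱼ [BS]_{ij} ≤ b · s · ‖B‖_max^{1−q} · ‖S‖_max^{1−q}, where ‖M‖_max is the maximum absolute entry of M. -/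
open Matrix

lemma aux_rpow_le {q x M : ℝ} (hq0 : 0 ≤ q) (hq1 : q < 1) (hx : 0 ≤ x) (hxM : x ≤ M) :
    x ≤ x ^ q * M ^ (1 - q) := by
  have h1 : x = x ^ q * x ^ (1 - q) := by
    rw [← Real.rpow_add' hx (by norm_num)]
    simp
  calc x = x ^ q * x ^ (1 - q) := h1
    _ ≤ x ^ q * M ^ (1 - q) := by
        apply mul_le_mul_of_nonneg_left _ (Real.rpow_nonneg hx q)
        exact Real.rpow_le_rpow hx hxM (by linarith)

lemma maxNorm_entry_le {m n : Type*} [Fintype m] [Fintype n] (A : Matrix m n ℝ)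
    (i : m) (j : n) : A i j ≤ maxNorm A := by
  refine le_trans (le_abs_self _) ?_
  exact le_ciSup (f := fun ij : m × n => |A ij.1 ij.2|)
    (Set.Finite.bddAbove (Set.finite_range _)) (i, j)

/-- Soft-sparsity of the product of two soft-sparse matrices: each row sum of `B * S`
is bounded by `b * s * ‖B‖_max^(1−q) * ‖S‖_max^(1−q)`. -/
theorem product_soft_sparsity {d k : ℕ} (q s b : ℝ)
    (hq0 : 0 ≤ q) (hq1 : q < 1) (hs : 0 < s) (hb : 0 < b)
    (S : Matrix (Fin d) (Fin d) ℝ) (B : Matrix (Fin k) (Fin d) ℝ)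
    (hSsymm : S.IsSymm)
    (hSpos : ∀ i j, 0 ≤ S i j) (hBpos : ∀ i j, 0 ≤ B i j)
    (hSrow : ∀ i, ∑ j, (S i j) ^ q ≤ s)
    (hBrow : ∀ i, ∑ j, (B i j) ^ q ≤ b) :
    ∀ i, ∑ j, (B * S) i j ≤ b * s * maxNorm B ^ (1 - q) * maxNorm S ^ (1 - q) := by
  intro i
  rcases Nat.eq_zero_or_pos d with hd | hd
  · subst hd
    simp only [Finset.univ_eq_empty, Finset.sum_empty]
    have hMB : maxNorm B = 0 := Real.iSup_of_isEmpty _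
    have hMS : maxNorm S = 0 := Real.iSup_of_isEmpty _
    rw [hMB, hMS, Real.zero_rpow (by linarith)]
    simp
  have hMB : 0 ≤ maxNorm B := le_trans (hBpos i ⟨0, hd⟩) (maxNorm_entry_le B i ⟨0, hd⟩)
  have hMS : 0 ≤ maxNorm S :=
    le_trans (hSpos ⟨0, hd⟩ ⟨0, hd⟩) (maxNorm_entry_le S ⟨0, hd⟩ ⟨0, hd⟩)
  have key : ∑ j, (B * S) i j = ∑ l, B i l * ∑ j, S l j := by
    simp [Matrix.mul_apply, Finset.mul_sum]
    rw [Finset.sum_comm]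
  rw [key]
  have step1 : ∀ l, B i l * ∑ j, S l j ≤
      (B i l) ^ q * maxNorm B ^ (1 - q) * (s * maxNorm S ^ (1 - q)) := by
    intro l
    have hS : ∑ j, S l j ≤ s * maxNorm S ^ (1 - q) := by
      calc ∑ j, S l j ≤ ∑ j, (S l j) ^ q * maxNorm S ^ (1 - q) := by
            apply Finset.sum_le_sum
            intro j _
            exact aux_rpow_le hq0 hq1 (hSpos l j) (maxNorm_entry_le S l j)
        _ = (∑ j, (S l j) ^ q) * maxNorm S ^ (1 - q) := by rw [Finset.sum_mul]
        _ ≤ s * maxNorm S ^ (1 - q) := by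
            apply mul_le_mul_of_nonneg_right (hSrow l) (Real.rpow_nonneg hMS _)
    have hB : B i l ≤ (B i l) ^ q * maxNorm B ^ (1 - q) :=
      aux_rpow_le hq0 hq1 (hBpos i l) (maxNorm_entry_le B i l)
    have h1 : 0 ≤ ∑ j, S l j := Finset.sum_nonneg fun j _ => hSpos l j
    have h2 : 0 ≤ (B i l) ^ q * maxNorm B ^ (1 - q) :=
      mul_nonneg (Real.rpow_nonneg (hBpos i l) _) (Real.rpow_nonneg hMB _)
    exact mul_le_mul hB hS h1 h2
  calc ∑ l, B i l * ∑ j, S l j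
      ≤ ∑ l, (B i l) ^ q * maxNorm B ^ (1 - q) * (s * maxNorm S ^ (1 - q)) :=
        Finset.sum_le_sum fun l _ => step1 l
    _ = (∑ l, (B i l) ^ q) * (maxNorm B ^ (1 - q) * (s * maxNorm S ^ (1 - q))) := by
        rw [Finset.sum_mul]
        exact Finset.sum_congr rfl fun x _ => by ring
    _ ≤ b * (maxNorm B ^ (1 - q) * (s * maxNorm S ^ (1 - q))) := by
        apply mul_le_mul_of_nonneg_right (hBrow i)
        positivity
    _ = b * s * maxNorm B ^ (1 - q) * maxNorm S ^ (1 - q) := by ring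
end

section
/- Fix q ∈ [0,1) and positive reals s, b₁, b₂. Let S be a d×d symmetric matrix with nonnegative entries such that every row satisfies Σⱼ S_{ij}^q ≤ s, and let B be a k×d matrix with nonnegative entries such that every row of B satisfies Σ_l B_{il}^q ≤ b₁ and every row of Bᵀ (column of B) satisfies Σⱼ B_{jm}^q ≤ b₂. Then every row sum of B S Bᵀ satisfies Σⱼ [BSBᵀ]_{ij} ≤ b₁ b₂ s ‖B‖_max^{2(1−q)} ‖S‖_max^{1−q}. -/
/-!
Since `0 ≤ x ≤ M` gives `x ≤ x ^ q * M ^ (1 - q)`, each `ℓ_q`-type row or column bound turns into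
an ordinary sum bound: rows of `B` sum to at most `b₁ ‖B‖_max^(1-q)`, columns of `B` to at most
`b₂ ‖B‖_max^(1-q)`, rows of `S` to at most `s ‖S‖_max^(1-q)`. For nonnegative matrices, a row sum of
`A * C` is at most the row sum of `A` times a bound on the row sums of `C`; applying this to
`(B * S) * Bᵀ` and then to `B * S` gives the claim.
-/

open Matrix

lemma le_rpow_mul_rpow_one_sub {q x M : ℝ} (hq : q ≤ 1) (hx : 0 ≤ x) (hxM : x ≤ M) :
    x ≤ x ^ q * M ^ (1 - q) :=
  calc x = x ^ q * x ^ (1 - q) := by rw [← Real.rpow_add' hx (by norm_num)]; simp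
    _ ≤ x ^ q * M ^ (1 - q) := by gcongr

lemma Finset.sum_le_mul_rpow_of_sum_rpow_le {ι : Type*} (s : Finset ι) {f : ι → ℝ}
    {q M c : ℝ} (hq : q ≤ 1) (hM : 0 ≤ M) (hf : ∀ i ∈ s, 0 ≤ f i) (hfM : ∀ i ∈ s, f i ≤ M)
    (hc : ∑ i ∈ s, f i ^ q ≤ c) :
    ∑ i ∈ s, f i ≤ c * M ^ (1 - q) :=
  calc ∑ i ∈ s, f i ≤ ∑ i ∈ s, f i ^ q * M ^ (1 - q) :=
        Finset.sum_le_sum fun i hi => le_rpow_mul_rpow_one_sub hq (hf i hi) (hfM i hi)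
    _ = (∑ i ∈ s, f i ^ q) * M ^ (1 - q) := (Finset.sum_mul ..).symm
    _ ≤ c * M ^ (1 - q) := by gcongr

section maxNorm

variable {m n : Type*} [Fintype m] [Fintype n]

lemma maxNorm_nonneg (A : Matrix m n ℝ) : 0 ≤ maxNorm A :=
  Real.iSup_nonneg fun _ => abs_nonneg _

lemma abs_le_maxNorm (A : Matrix m n ℝ) (i : m) (j : n) : |A i j| ≤ maxNorm A :=
  le_ciSup (f := fun ij : m × n => |A ij.1 ij.2|) (Finite.bddAbove_range _) (i, j)

lemma le_maxNorm (A : Matrix m n ℝ) (i : m) (j : n) : A i j ≤ maxNorm A :=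
  (le_abs_self _).trans (abs_le_maxNorm A i j)

lemma sum_row_le_mul_maxNorm_rpow {A : Matrix m n ℝ} {q c : ℝ} (hq : q ≤ 1)
    (hA : ∀ i j, 0 ≤ A i j) {i : m} (hc : ∑ j, A i j ^ q ≤ c) :
    ∑ j, A i j ≤ c * maxNorm A ^ (1 - q) :=
  Finset.univ.sum_le_mul_rpow_of_sum_rpow_le hq (maxNorm_nonneg A)
    (fun j _ => hA i j) (fun j _ => le_maxNorm A i j) hc

end maxNorm

namespace Matrix

variable {R l m n : Type*} [Fintype m] [Fintype n]

lemma sum_mul_apply [NonUnitalNonAssocSemiring R] (A : Matrix l m R) (C : Matrix m n R) (i : l) :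
    ∑ j, (A * C) i j = ∑ k, A i k * ∑ j, C k j := by
  simp only [mul_apply, Finset.mul_sum]
  exact Finset.sum_comm

lemma sum_mul_apply_le [Semiring R] [PartialOrder R] [IsOrderedRing R]
    {A : Matrix l m R} {C : Matrix m n R} {i : l} {γ : R}
    (hA : ∀ k, 0 ≤ A i k) (hC : ∀ k, ∑ j, C k j ≤ γ) :
    ∑ j, (A * C) i j ≤ (∑ k, A i k) * γ := by
  rw [sum_mul_apply, Finset.sum_mul]
  exact Finset.sum_le_sum fun k _ => mul_le_mul_of_nonneg_left (hC k) (hA k)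

end Matrix

theorem triple_product_soft_sparsity_general {d k : ℕ} (q s b₁ b₂ : ℝ)
    (hq1 : q < 1) (hs : 0 < s) (hb₂ : 0 < b₂)
    (S : Matrix (Fin d) (Fin d) ℝ) (B : Matrix (Fin k) (Fin d) ℝ)
    (hSpos : ∀ i j, 0 ≤ S i j) (hBpos : ∀ i j, 0 ≤ B i j)
    (hSrow : ∀ i, ∑ j, (S i j) ^ q ≤ s)
    (hBrow : ∀ i, ∑ l, (B i l) ^ q ≤ b₁)
    (hBcol : ∀ m, ∑ j, (B j m) ^ q ≤ b₂) :
    ∀ i, ∑ j, (B * S * Bᵀ) i j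
      ≤ b₁ * b₂ * s * maxNorm B ^ (2 * (1 - q)) * maxNorm S ^ (1 - q) := by
  intro i
  have hBS : ∀ m, 0 ≤ (B * S) i m := fun m => by
    rw [mul_apply]
    exact Finset.sum_nonneg fun l _ => mul_nonneg (hBpos i l) (hSpos l m)
  have hBcol' : ∀ m, ∑ j, Bᵀ m j ≤ b₂ * maxNorm B ^ (1 - q) := fun m =>
    Finset.univ.sum_le_mul_rpow_of_sum_rpow_le hq1.le (maxNorm_nonneg B)
      (fun j _ => hBpos j m) (fun j _ => le_maxNorm B j m) (hBcol m)
  have hMB := Real.rpow_nonneg (maxNorm_nonneg B) (1 - q)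
  have hMS := Real.rpow_nonneg (maxNorm_nonneg S) (1 - q)
  calc ∑ j, (B * S * Bᵀ) i j ≤ (∑ m, (B * S) i m) * (b₂ * maxNorm B ^ (1 - q)) :=
        sum_mul_apply_le hBS hBcol'
    _ ≤ (∑ l, B i l) * (s * maxNorm S ^ (1 - q)) * (b₂ * maxNorm B ^ (1 - q)) := by
        gcongr
        exact sum_mul_apply_le (hBpos i) fun l =>
          sum_row_le_mul_maxNorm_rpow hq1.le hSpos (hSrow l)
    _ ≤ b₁ * maxNorm B ^ (1 - q) * (s * maxNorm S ^ (1 - q)) * (b₂ * maxNorm B ^ (1 - q)) := by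
        gcongr
        exact sum_row_le_mul_maxNorm_rpow hq1.le hBpos (hBrow i)
    _ = b₁ * b₂ * s * maxNorm B ^ (2 * (1 - q)) * maxNorm S ^ (1 - q) := by
        rw [mul_comm 2, Real.rpow_mul (maxNorm_nonneg B), Real.rpow_two]
        ring

/-- Soft-sparsity of `B S Bᵀ`: each row sum is bounded by
`b₁ * b₂ * s * ‖B‖_max^(2(1−q)) * ‖S‖_max^(1−q)`. -/
theorem triple_product_soft_sparsity {d k : ℕ} (q s b₁ b₂ : ℝ)
    (hq0 : 0 ≤ q) (hq1 : q < 1) (hs : 0 < s) (hb₁ : 0 < b₁) (hb₂ : 0 < b₂)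
    (S : Matrix (Fin d) (Fin d) ℝ) (B : Matrix (Fin k) (Fin d) ℝ)
    (hSsymm : S.IsSymm)
    (hSpos : ∀ i j, 0 ≤ S i j) (hBpos : ∀ i j, 0 ≤ B i j)
    (hSrow : ∀ i, ∑ j, (S i j) ^ q ≤ s)
    (hBrow : ∀ i, ∑ l, (B i l) ^ q ≤ b₁)
    (hBcol : ∀ m, ∑ j, (B j m) ^ q ≤ b₂) :
    ∀ i, ∑ j, (B * S * Bᵀ) i j
      ≤ b₁ * b₂ * s * maxNorm B ^ (2 * (1 - q)) * maxNorm S ^ (1 - q) :=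
  triple_product_soft_sparsity_general q s b₁ b₂ hq1 hs hb₂ S B hSpos hBpos hSrow hBrow hBcol
end

section
/- Let Σ̂ and Σ be d×d real symmetric matrices with ‖Σ̂ − Σ‖_max ≤ ρ/2 for some ρ > 0, and suppose Σ satisfies the soft-sparsity condition max_i Σⱼ |Σ_{ij}|^q ≤ R for some q ∈ [0,1) and R > 0. Define the thresholded matrix Σ̂_ρ by [Σ̂_ρ]_{ij} = Σ̂_{ij} if |Σ̂_{ij}| ≥ ρ and 0 otherwise. Then ‖Σ̂_ρ − Σ‖_∞ ≤ 4 R ρ^{1−q}, where ‖M‖_∞ = max_i Σⱼ |M_{ij}| is the maximum absolute row sum. -/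
/-!
Entrywise, `|T_ij − Σ_ij| ≤ 3 ρ^(1−q) |Σ_ij|^q`. If `|Σ_ij| ≥ ρ/2`, the error is at most `3ρ/2`
whatever thresholding does, and `ρ ≤ 2 ρ^(1−q) |Σ_ij|^q`. Otherwise `|Σ̂_ij| < ρ`, so the entry
is zeroed out and the error is `|Σ_ij| ≤ ρ^(1−q) |Σ_ij|^q`. Summing along a row and using the
sparsity bound gives `3 R ρ^(1−q)`.
-/

open Matrix

noncomputable def hardThreshold (ρ x : ℝ) : ℝ := if ρ ≤ |x| then x else 0

theorem abs_hardThreshold_sub_le_three_halves {ρ x s : ℝ} (h : |x - s| ≤ ρ / 2) :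
    |hardThreshold ρ x - s| ≤ 3 * ρ / 2 := by
  unfold hardThreshold
  split_ifs with hx
  · linarith [abs_nonneg (x - s)]
  · have : |s| - |x| ≤ |x - s| := by rw [abs_sub_comm x s]; exact abs_sub_abs_le_abs_sub s x
    rw [zero_sub, abs_neg]
    linarith

theorem hardThreshold_eq_zero {ρ x s : ℝ} (h : |x - s| ≤ ρ / 2) (hs : |s| < ρ / 2) :
    hardThreshold ρ x = 0 := by
  have : |x| - |s| ≤ |x - s| := abs_sub_abs_le_abs_sub x s
  exact if_neg (by linarith)

theorem le_two_mul_rpow_mul_rpow {ρ x q : ℝ} (hρ : 0 < ρ) (hx : ρ ≤ 2 * x)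
    (hq0 : 0 ≤ q) (hq1 : q ≤ 1) : ρ ≤ 2 * ρ ^ (1 - q) * x ^ q := by
  have hx0 : 0 ≤ x := by linarith
  have h2q : (2 : ℝ) ^ q ≤ 2 := by
    simpa using Real.rpow_le_rpow_of_exponent_le (by norm_num : (1 : ℝ) ≤ 2) hq1
  have hρq : ρ ^ q ≤ 2 * x ^ q :=
    calc ρ ^ q ≤ (2 * x) ^ q := Real.rpow_le_rpow hρ.le hx hq0
      _ = 2 ^ q * x ^ q := Real.mul_rpow (by norm_num) hx0
      _ ≤ 2 * x ^ q := by gcongr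
  calc ρ = ρ ^ (1 - q) * ρ ^ q := by rw [← Real.rpow_add hρ]; norm_num
    _ ≤ ρ ^ (1 - q) * (2 * x ^ q) := by gcongr
    _ = 2 * ρ ^ (1 - q) * x ^ q := by ring

theorem le_rpow_mul_rpow {ρ x q : ℝ} (hx0 : 0 ≤ x) (hx : x ≤ ρ) (hq1 : q ≤ 1) :
    x ≤ ρ ^ (1 - q) * x ^ q :=
  calc x = x ^ (1 - q) * x ^ q := by rw [← Real.rpow_add' hx0 (by norm_num)]; norm_num
    _ ≤ ρ ^ (1 - q) * x ^ q := by gcongr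

theorem abs_hardThreshold_sub_le {ρ x s q : ℝ} (hρ : 0 < ρ) (hq0 : 0 ≤ q) (hq1 : q ≤ 1)
    (h : |x - s| ≤ ρ / 2) : |hardThreshold ρ x - s| ≤ 3 * ρ ^ (1 - q) * |s| ^ q := by
  have hpow : 0 ≤ ρ ^ (1 - q) * |s| ^ q := by positivity
  by_cases hs : ρ / 2 ≤ |s|
  · have := le_two_mul_rpow_mul_rpow hρ (by linarith) hq0 hq1 (x := |s|)
    linarith [abs_hardThreshold_sub_le_three_halves h]
  · replace hs := not_le.mp hs
    have := le_rpow_mul_rpow (abs_nonneg s) (by linarith) hq1 (ρ := ρ)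
    rw [hardThreshold_eq_zero h hs, zero_sub, abs_neg]
    linarith

theorem thresholded_estimator_bound_general {d : ℕ} (q R ρ : ℝ)
    (hq0 : 0 ≤ q) (hq1 : q < 1) (hρ : 0 < ρ)
    (Shat Smat T : Matrix (Fin d) (Fin d) ℝ)
    (hmax : ∀ i j, |Shat i j - Smat i j| ≤ ρ / 2)
    (hsparse : ∀ i, ∑ j, |Smat i j| ^ q ≤ R)
    (hT : ∀ i j, T i j = if ρ ≤ |Shat i j| then Shat i j else 0) :
    ∀ i, ∑ j, |T i j - Smat i j| ≤ 4 * R * ρ ^ (1 - q) := by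
  intro i
  calc ∑ j, |T i j - Smat i j| ≤ ∑ j, 3 * ρ ^ (1 - q) * |Smat i j| ^ q := by
        gcongr with j
        rw [hT]
        exact abs_hardThreshold_sub_le hρ hq0 hq1.le (hmax i j)
    _ = 3 * ρ ^ (1 - q) * ∑ j, |Smat i j| ^ q := by rw [Finset.mul_sum]
    _ ≤ 4 * ρ ^ (1 - q) * ∑ j, |Smat i j| ^ q := by gcongr; norm_num
    _ = 4 * (∑ j, |Smat i j| ^ q) * ρ ^ (1 - q) := by ring
    _ ≤ 4 * R * ρ ^ (1 - q) := by gcongr; exact hsparse i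

/-- Deterministic core of localized (thresholded) covariance estimation: if
`‖Σ̂ − Σ‖_max ≤ ρ/2` and `Σ` is soft-sparse, then the thresholded estimator `T` satisfies
the max-row-sum bound `‖T − Σ‖_∞ ≤ 4 R ρ^(1−q)`. -/
theorem thresholded_estimator_bound {d : ℕ} (q R ρ : ℝ)
    (hq0 : 0 ≤ q) (hq1 : q < 1) (hR : 0 < R) (hρ : 0 < ρ)
    (Shat Smat T : Matrix (Fin d) (Fin d) ℝ)
    (hShatsymm : Shat.IsSymm) (hSsymm : Smat.IsSymm)
    (hmax : ∀ i j, |Shat i j - Smat i j| ≤ ρ / 2)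
    (hsparse : ∀ i, ∑ j, |Smat i j| ^ q ≤ R)
    (hT : ∀ i j, T i j = if ρ ≤ |Shat i j| then Shat i j else 0) :
    ∀ i, ∑ j, |T i j - Smat i j| ≤ 4 * R * ρ ^ (1 - q) :=
  thresholded_estimator_bound_general q R ρ hq0 hq1 hρ Shat Smat T hmax hsparse hT
end
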